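/- arXiv:2105.07124 — 4 statements merged into one kernel-verified Lean document; each statement's English description precedes it below -/
import Mathlib

section
/- Let A = (a_ij) be a 2×2 real symmetric matrix. Then A is copositive (i.e., xᵀAx ≥ 0 for all x ∈ ℝ² with x₁ ≥ 0, x₂ ≥ 0) if and only if a₁₁ ≥ 0, a₂₂ ≥ 0, and a₁₂ + √(a₁₁a₂₂) ≥ 0. -/
open Matrix

/-- A 2×2 real symmetric matrix `A` is copositive (`xᵀAx ≥ 0` for all `x` with
nonnegative entries) if and only if `a₁₁ ≥ 0`, `a₂₂ ≥ 0` and `a₁₂ + √(a₁₁a₂₂) ≥ 0`. -/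
theorem copositive_two_dim_matrix (A : Matrix (Fin 2) (Fin 2) ℝ) (hA : A.IsSymm) :
    (∀ x : Fin 2 → ℝ, (∀ i, 0 ≤ x i) → 0 ≤ x ⬝ᵥ A.mulVec x) ↔
      (0 ≤ A 0 0 ∧ 0 ≤ A 1 1 ∧ 0 ≤ A 0 1 + Real.sqrt (A 0 0 * A 1 1)) := by
  have hsym : A 1 0 = A 0 1 := by
    have h := hA
    rw [Matrix.IsSymm] at h
    calc A 1 0 = Aᵀ 0 1 := rfl
      _ = A 0 1 := by rw [h]
  have key : ∀ x : Fin 2 → ℝ, x ⬝ᵥ A.mulVec x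
      = A 0 0 * x 0 ^ 2 + 2 * A 0 1 * (x 0 * x 1) + A 1 1 * x 1 ^ 2 := by
    intro x
    simp [dotProduct, Matrix.mulVec, Fin.sum_univ_two, hsym]
    ring
  constructor
  · intro h
    have ha : 0 ≤ A 0 0 := by
      have := h ![1, 0] (by intro i; fin_cases i <;> norm_num)
      rw [key] at this
      simpa using this
    have hb : 0 ≤ A 1 1 := by
      have := h ![0, 1] (by intro i; fin_cases i <;> norm_num)
      rw [key] at this
      simpa using this
    refine ⟨ha, hb, ?_⟩
    rcases eq_or_lt_of_le (mul_nonneg ha hb) with hab | hab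
    · -- A00 * A11 = 0 : need A 0 1 ≥ 0
      rw [← hab, Real.sqrt_zero, add_zero]
      by_contra hc
      push_neg at hc
      rcases mul_eq_zero.mp hab.symm with h0 | h0
      · -- A00 = 0, use x = (t, 1)
        set t : ℝ := (A 1 1 + 1) / (-(2 * A 0 1)) with ht
        have htpos : 0 ≤ t := by
          apply div_nonneg (by linarith) (by linarith)
        have := h ![t, 1] (by intro i; fin_cases i <;> simp [htpos])
        rw [key] at this
        simp [h0, ht] at this
        have h2 : 2 * A 0 1 * ((A 1 1 + 1) / -(2 * A 0 1)) = -(A 1 1 + 1) := by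
          rw [mul_div_assoc']
          rw [div_eq_iff (by linarith : -(2 * A 0 1) ≠ 0)]
          ring
        rw [h2] at this
        linarith
      · -- A11 = 0, use x = (1, t)
        set t : ℝ := (A 0 0 + 1) / (-(2 * A 0 1)) with ht
        have htpos : 0 ≤ t := by
          apply div_nonneg (by linarith) (by linarith)
        have := h ![1, t] (by intro i; fin_cases i <;> simp [htpos])
        rw [key] at this
        simp [h0, ht] at this
        have h2 : 2 * A 0 1 * ((A 0 0 + 1) / -(2 * A 0 1)) = -(A 0 0 + 1) := by
          rw [mul_div_assoc']
          rw [div_eq_iff (by linarith : -(2 * A 0 1) ≠ 0)]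
          ring
        rw [h2] at this
        linarith
    · -- A00 * A11 > 0 : plug x = (√b, √a)
      have hs : 0 < Real.sqrt (A 0 0 * A 1 1) := Real.sqrt_pos.mpr hab
      have hsa := Real.sqrt_nonneg (A 0 0)
      have hsb := Real.sqrt_nonneg (A 1 1)
      have := h ![Real.sqrt (A 1 1), Real.sqrt (A 0 0)]
        (by intro i; fin_cases i <;> simp [hsa, hsb])
      rw [key] at this
      simp only [Matrix.cons_val_zero, Matrix.cons_val_one, Matrix.head_cons] at this
      rw [Real.sq_sqrt hb, Real.sq_sqrt ha] at this
      have hmul : Real.sqrt (A 1 1) * Real.sqrt (A 0 0) = Real.sqrt (A 0 0 * A 1 1) := by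
        rw [← Real.sqrt_mul hb, mul_comm]
      rw [hmul] at this
      have hsq : Real.sqrt (A 0 0 * A 1 1) ^ 2 = A 0 0 * A 1 1 :=
        Real.sq_sqrt (mul_nonneg ha hb)
      nlinarith [this, hs, hsq]
  · rintro ⟨ha, hb, hc⟩ x hx
    rw [key]
    have hmul : Real.sqrt (A 0 0) * Real.sqrt (A 1 1) = Real.sqrt (A 0 0 * A 1 1) :=
      (Real.sqrt_mul ha _).symm
    nlinarith [sq_nonneg (Real.sqrt (A 0 0) * x 0 - Real.sqrt (A 1 1) * x 1),
      Real.sq_sqrt ha, Real.sq_sqrt hb, mul_nonneg (hx 0) (hx 1),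
      mul_nonneg (mul_nonneg (hx 0) (hx 1)) (Real.sqrt_nonneg (A 0 0 * A 1 1)),
      mul_nonneg (mul_nonneg (hx 0) (hx 1)) hc]
end

section
/- Let A = (a_ij) be a 2×2 real symmetric matrix. Then A is strictly copositive (i.e., xᵀAx > 0 for all x ∈ ℝ² with x₁ ≥ 0, x₂ ≥ 0 and x ≠ 0) if and only if a₁₁ > 0, a₂₂ > 0, and a₁₂ + √(a₁₁a₂₂) > 0. -/
open Matrix

/-- A 2×2 real symmetric matrix `A` is strictly copositive (`xᵀAx > 0` for all `x ≠ 0` with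
nonnegative entries) if and only if `a₁₁ > 0`, `a₂₂ > 0` and `a₁₂ + √(a₁₁a₂₂) > 0`. -/
theorem strictly_copositive_two_dim_matrix (A : Matrix (Fin 2) (Fin 2) ℝ) (hA : A.IsSymm) :
    (∀ x : Fin 2 → ℝ, (∀ i, 0 ≤ x i) → x ≠ 0 → 0 < x ⬝ᵥ A.mulVec x) ↔
      (0 < A 0 0 ∧ 0 < A 1 1 ∧ 0 < A 0 1 + Real.sqrt (A 0 0 * A 1 1)) := by
  have hsym : A 1 0 = A 0 1 := by
    have := congrFun (congrFun hA 0) 1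
    simpa [Matrix.transpose_apply] using this
  have hq : ∀ x : Fin 2 → ℝ, x ⬝ᵥ A.mulVec x =
      A 0 0 * (x 0)^2 + 2 * A 0 1 * (x 0 * x 1) + A 1 1 * (x 1)^2 := by
    intro x
    simp [dotProduct, Matrix.mulVec, Fin.sum_univ_two, hsym]
    ring
  set a := A 0 0 with ha
  set b := A 0 1 with hb
  set c := A 1 1 with hc
  constructor
  · intro h
    have h1 : 0 < a := by
      have := h ![1, 0] (by intro i; fin_cases i <;> norm_num)
        (by intro heq; have := congrFun heq 0; norm_num at this)
      rw [hq] at this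
      simpa using this
    have h2 : 0 < c := by
      have := h ![0, 1] (by intro i; fin_cases i <;> norm_num)
        (by intro heq; have := congrFun heq 1; norm_num at this)
      rw [hq] at this
      simpa using this
    refine ⟨h1, h2, ?_⟩
    by_contra h3
    push_neg at h3
    have hsa : (0:ℝ) < Real.sqrt a := Real.sqrt_pos.mpr h1
    have hsc : (0:ℝ) < Real.sqrt c := Real.sqrt_pos.mpr h2
    have hval := h ![Real.sqrt c, Real.sqrt a]
      (by intro i; fin_cases i <;> positivity)
      (by intro heq; have := congrFun heq 0; simp at this; exact hsc.ne' this)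
    rw [hq] at hval
    simp only [Matrix.cons_val_zero, Matrix.cons_val_one, Matrix.head_cons] at hval
    have hsq_a : Real.sqrt a ^ 2 = a := Real.sq_sqrt h1.le
    have hsq_c : Real.sqrt c ^ 2 = c := Real.sq_sqrt h2.le
    have hmul : Real.sqrt (a * c) = Real.sqrt a * Real.sqrt c := Real.sqrt_mul h1.le _
    have key : a * Real.sqrt c ^ 2 + 2 * b * (Real.sqrt c * Real.sqrt a) + c * Real.sqrt a ^ 2
        = 2 * (Real.sqrt a * Real.sqrt c) * (b + Real.sqrt a * Real.sqrt c) := by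
      rw [hsq_a, hsq_c]
      have : Real.sqrt a * Real.sqrt a = a := Real.mul_self_sqrt h1.le
      have h2' : Real.sqrt c * Real.sqrt c = c := Real.mul_self_sqrt h2.le
      nlinarith [this, h2']
    rw [key] at hval
    have : b + Real.sqrt a * Real.sqrt c ≤ 0 := by rw [← hmul]; linarith
    nlinarith [mul_pos hsa hsc]
  · rintro ⟨h1, h2, h3⟩ x hx hne
    rw [hq]
    have hsa : (0:ℝ) < Real.sqrt a := Real.sqrt_pos.mpr h1
    have hsc : (0:ℝ) < Real.sqrt c := Real.sqrt_pos.mpr h2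
    have hmul : Real.sqrt (a * c) = Real.sqrt a * Real.sqrt c := Real.sqrt_mul h1.le _
    rw [hmul] at h3
    have hx0 := hx 0
    have hx1 := hx 1
    have hne' : x 0 ≠ 0 ∨ x 1 ≠ 0 := by
      by_contra hcon
      push_neg at hcon
      apply hne
      funext i
      fin_cases i
      · exact hcon.1
      · exact hcon.2
    have hsqa : Real.sqrt a * Real.sqrt a = a := Real.mul_self_sqrt h1.le
    have hsqc : Real.sqrt c * Real.sqrt c = c := Real.mul_self_sqrt h2.le
    rcases eq_or_lt_of_le hx0 with h0 | h0
    · rcases eq_or_lt_of_le hx1 with hh1 | hh1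
      · exact absurd (Or.elim hne' (fun h => h h0.symm) (fun h => h hh1.symm)) (by simp)
      · rw [← h0]
        have : 0 < c * (x 1)^2 := by positivity
        simpa using this
    · rcases eq_or_lt_of_le hx1 with hh1 | hh1
      · rw [← hh1]
        have : 0 < a * (x 0)^2 := by positivity
        simpa using this
      · have hkey : a * (x 0)^2 + 2 * b * (x 0 * x 1) + c * (x 1)^2
            = (Real.sqrt a * x 0 - Real.sqrt c * x 1)^2
              + 2 * (b + Real.sqrt a * Real.sqrt c) * (x 0 * x 1) := by
          nlinarith [sq_nonneg (Real.sqrt a * x 0 - Real.sqrt c * x 1), hsqa, hsqc]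
        rw [hkey]
        have : 0 < 2 * (b + Real.sqrt a * Real.sqrt c) * (x 0 * x 1) := by positivity
        nlinarith [sq_nonneg (Real.sqrt a * x 0 - Real.sqrt c * x 1)]
end

section
/- Let A be a 4th order 2-dimensional symmetric tensor with a₁₁₁₁ > 0 and a₂₂₂₂ > 0. If I³ − 27J² ≥ 0, |a₁₂₂₂√a₁₁₁₁ − a₁₁₁₂√a₂₂₂₂| ≤ √(6a₁₁₁₁a₁₁₂₂a₂₂₂₂ + 2a₁₁₁₁a₂₂₂₂√(a₁₁₁₁a₂₂₂₂)), and either (i) −√(a₁₁₁₁a₂₂₂₂) ≤ 3a₁₁₂₂ ≤ 3√(a₁₁₁₁a₂₂₂₂), or (ii) a₁₁₂₂ > √(a₁₁₁₁a₂₂₂₂) and |a₁₂₂₂√a₁₁₁₁ + a₁₁₁₂√a₂₂₂₂| ≤ √(6a₁₁₁₁a₁₁₂₂a₂₂₂₂ − 2a₁₁₁₁a₂₂₂₂√(a₁₁₁₁a₂₂₂₂)), then A is copositive, i.e., Ax⁴ ≥ 0 for all x ∈ ℝ²₊. -/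
set_option maxHeartbeats 1600000 in
/-- Sufficient condition for copositivity of a 4th order 2-dimensional symmetric tensor
with `a₁₁₁₁ > 0`, `a₂₂₂₂ > 0`: if `I³ − 27J² ≥ 0`, the stated absolute-value inequality
holds, and either (i) or (ii) holds, then `Ax⁴ ≥ 0` for all `x ∈ ℝ²₊`. -/
theorem copositive_sufficient_4th_2dim (a1111 a1112 a1122 a1222 a2222 I J : ℝ)
    (h1 : 0 < a1111) (h2 : 0 < a2222)
    (hI : I = a1111 * a2222 - 4 * a1112 * a1222 + 3 * a1122 ^ 2)
    (hJ : J = a1111 * a1122 * a2222 + 2 * a1112 * a1122 * a1222 - a1122 ^ 3 -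
      a1111 * a1222 ^ 2 - a1112 ^ 2 * a2222)
    (hIJ : 0 ≤ I ^ 3 - 27 * J ^ 2)
    (habs : |a1222 * Real.sqrt a1111 - a1112 * Real.sqrt a2222| ≤
      Real.sqrt (6 * a1111 * a1122 * a2222 + 2 * a1111 * a2222 * Real.sqrt (a1111 * a2222)))
    (hc : (-Real.sqrt (a1111 * a2222) ≤ 3 * a1122 ∧
            3 * a1122 ≤ 3 * Real.sqrt (a1111 * a2222)) ∨
          (Real.sqrt (a1111 * a2222) < a1122 ∧
            |a1222 * Real.sqrt a1111 + a1112 * Real.sqrt a2222| ≤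
              Real.sqrt (6 * a1111 * a1122 * a2222 -
                2 * a1111 * a2222 * Real.sqrt (a1111 * a2222)))) :
    ∀ x1 x2 : ℝ, 0 ≤ x1 → 0 ≤ x2 →
      0 ≤ a1111 * x1 ^ 4 + 4 * a1112 * x1 ^ 3 * x2 + 6 * a1122 * x1 ^ 2 * x2 ^ 2 +
        4 * a1222 * x1 * x2 ^ 3 + a2222 * x2 ^ 4 := by
  subst hI
  subst hJ
  intro x1 x2 hx1 hx2
  by_contra hcon0
  push_neg at hcon0
  -- introduce α = √a1111, β = √a2222 and eliminate square roots
  have hsab : Real.sqrt (a1111 * a2222) = Real.sqrt a1111 * Real.sqrt a2222 :=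
    Real.sqrt_mul h1.le _
  rw [hsab] at habs hc
  obtain ⟨α, hαd⟩ : ∃ y : ℝ, Real.sqrt a1111 = y := ⟨_, rfl⟩
  obtain ⟨β, hβd⟩ : ∃ y : ℝ, Real.sqrt a2222 = y := ⟨_, rfl⟩
  rw [hαd, hβd] at habs hc
  have hαpos : 0 < α := by rw [← hαd]; exact Real.sqrt_pos.mpr h1
  have hβpos : 0 < β := by rw [← hβd]; exact Real.sqrt_pos.mpr h2
  have ha : a1111 = α ^ 2 := by rw [← hαd]; exact (Real.sq_sqrt h1.le).symm
  have he : a2222 = β ^ 2 := by rw [← hβd]; exact (Real.sq_sqrt h2.le).symm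
  subst ha
  subst he
  clear hαd hβd hsab
  -- squared form of habs
  have h6c2 : 0 ≤ 6 * a1122 + 2 * (α * β) := by
    rcases hc with ⟨h, _⟩ | ⟨h, _⟩
    · linarith
    · nlinarith [mul_pos hαpos hβpos]
  have habs2 : (a1222 * α - a1112 * β) ^ 2 ≤ α ^ 2 * β ^ 2 * (6 * a1122 + 2 * (α * β)) := by
    have hXeq : 6 * α ^ 2 * a1122 * β ^ 2 + 2 * α ^ 2 * β ^ 2 * (α * β)
        = α ^ 2 * β ^ 2 * (6 * a1122 + 2 * (α * β)) := by ring
    have hX0 : 0 ≤ α ^ 2 * β ^ 2 * (6 * a1122 + 2 * (α * β)) :=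
      mul_nonneg (by positivity) h6c2
    rw [hXeq] at habs
    calc (a1222 * α - a1112 * β) ^ 2 = |a1222 * α - a1112 * β| ^ 2 := (sq_abs _).symm
      _ ≤ Real.sqrt (α ^ 2 * β ^ 2 * (6 * a1122 + 2 * (α * β))) ^ 2 :=
          pow_le_pow_left₀ (abs_nonneg _) habs 2
      _ = _ := Real.sq_sqrt hX0
  clear habs
  -- reduce to one variable t₀ = x1/x2
  have hx2pos : 0 < x2 := by
    rcases eq_or_lt_of_le hx2 with h0 | h0
    · exfalso
      rw [← h0] at hcon0
      nlinarith [sq_nonneg (α * x1 ^ 2)]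
    · exact h0
  obtain ⟨t₀, ht₀d⟩ : ∃ y : ℝ, y = x1 / x2 := ⟨_, rfl⟩
  have ht₀nn : 0 ≤ t₀ := by rw [ht₀d]; positivity
  have hgneg : α ^ 2 * t₀ ^ 4 + 4 * a1112 * t₀ ^ 3 + 6 * a1122 * t₀ ^ 2 + 4 * a1222 * t₀
      + β ^ 2 < 0 := by
    have key : α ^ 2 * x1 ^ 4 + 4 * a1112 * x1 ^ 3 * x2 + 6 * a1122 * x1 ^ 2 * x2 ^ 2 +
        4 * a1222 * x1 * x2 ^ 3 + β ^ 2 * x2 ^ 4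
        = x2 ^ 4 * (α ^ 2 * t₀ ^ 4 + 4 * a1112 * t₀ ^ 3 + 6 * a1122 * t₀ ^ 2 + 4 * a1222 * t₀
          + β ^ 2) := by
      rw [ht₀d]; field_simp
    by_contra hcon
    push_neg at hcon
    nlinarith [mul_nonneg (by positivity : (0:ℝ) ≤ x2 ^ 4) hcon]
  clear hcon0 ht₀d hx1 hx2 hx2pos
  -- the one-variable quartic g
  have hcont : Continuous (fun t : ℝ => α ^ 2 * t ^ 4 + 4 * a1112 * t ^ 3 + 6 * a1122 * t ^ 2
      + 4 * a1222 * t + β ^ 2) := by fun_prop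
  -- root r1 ∈ (0, t₀)
  have hmem1 : (0:ℝ) ∈ Set.Icc (α ^ 2 * t₀ ^ 4 + 4 * a1112 * t₀ ^ 3 + 6 * a1122 * t₀ ^ 2
      + 4 * a1222 * t₀ + β ^ 2) (α ^ 2 * (0:ℝ) ^ 4 + 4 * a1112 * 0 ^ 3 + 6 * a1122 * 0 ^ 2
      + 4 * a1222 * 0 + β ^ 2) := Set.mem_Icc.mpr ⟨hgneg.le, by norm_num; positivity⟩
  obtain ⟨r1, hr1I, hgr1⟩ := intermediate_value_Icc' ht₀nn hcont.continuousOn hmem1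
  have hgr1' : α ^ 2 * r1 ^ 4 + 4 * a1112 * r1 ^ 3 + 6 * a1122 * r1 ^ 2 + 4 * a1222 * r1
      + β ^ 2 = 0 := hgr1
  -- large point T with g T > 0
  obtain ⟨T, hTd⟩ : ∃ y : ℝ, y = t₀ + 1 + (|4 * a1112| + |6 * a1122| + |4 * a1222|) / α ^ 2 :=
    ⟨_, rfl⟩
  have hT1 : 1 ≤ T := by
    rw [hTd]
    have : 0 ≤ (|4 * a1112| + |6 * a1122| + |4 * a1222|) / α ^ 2 := by positivity
    linarith
  have hTt₀ : t₀ < T := by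
    rw [hTd]
    have : 0 ≤ (|4 * a1112| + |6 * a1122| + |4 * a1222|) / α ^ 2 := by positivity
    linarith
  have hT0 : 0 < T := lt_of_lt_of_le one_pos hT1
  have hαT : α ^ 2 * T = α ^ 2 * (t₀ + 1) + (|4 * a1112| + |6 * a1122| + |4 * a1222|) := by
    rw [hTd]; field_simp
  have hgT : 0 < α ^ 2 * T ^ 4 + 4 * a1112 * T ^ 3 + 6 * a1122 * T ^ 2 + 4 * a1222 * T
      + β ^ 2 := by
    have p3 : (0:ℝ) < T ^ 3 := by positivity
    have b1 : -(|4 * a1112|) * T ^ 3 ≤ 4 * a1112 * T ^ 3 :=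
      mul_le_mul_of_nonneg_right (neg_abs_le _) p3.le
    have hT23 : T ^ 2 ≤ T ^ 3 := by nlinarith [sq_nonneg T]
    have hT13 : T ≤ T ^ 3 := by nlinarith [sq_nonneg T, sq_nonneg (T - 1)]
    have b2 : -(|6 * a1122|) * T ^ 3 ≤ 6 * a1122 * T ^ 2 := by
      nlinarith [neg_abs_le (6 * a1122), abs_nonneg (6 * a1122),
        (by positivity : (0:ℝ) ≤ T ^ 2)]
    have b3 : -(|4 * a1222|) * T ^ 3 ≤ 4 * a1222 * T := by
      nlinarith [neg_abs_le (4 * a1222), abs_nonneg (4 * a1222), hT0]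
    have b5 : α ^ 2 * T ^ 4 = (α ^ 2 * (t₀ + 1) + (|4 * a1112| + |6 * a1122| + |4 * a1222|))
        * T ^ 3 := by linear_combination T ^ 3 * hαT
    have b6 : 0 < α ^ 2 * (t₀ + 1) * T ^ 3 := by positivity
    linarith [b1, b2, b3, b5, b6, sq_nonneg β]
  -- root r2 ∈ (t₀, T)
  have hmem2 : (0:ℝ) ∈ Set.Icc (α ^ 2 * t₀ ^ 4 + 4 * a1112 * t₀ ^ 3 + 6 * a1122 * t₀ ^ 2
      + 4 * a1222 * t₀ + β ^ 2) (α ^ 2 * T ^ 4 + 4 * a1112 * T ^ 3 + 6 * a1122 * T ^ 2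
      + 4 * a1222 * T + β ^ 2) := Set.mem_Icc.mpr ⟨hgneg.le, hgT.le⟩
  obtain ⟨r2, hr2I, hgr2⟩ := intermediate_value_Icc hTt₀.le hcont.continuousOn hmem2
  have hgr2' : α ^ 2 * r2 ^ 4 + 4 * a1112 * r2 ^ 3 + 6 * a1122 * r2 ^ 2 + 4 * a1222 * r2
      + β ^ 2 = 0 := hgr2
  clear hcont hgr1 hgr2 hgT hαT hT1 hT0 hTd hTt₀
  have hr1t : r1 < t₀ := by
    rcases eq_or_lt_of_le hr1I.2 with h | h
    · exfalso; rw [h] at hgr1'; linarith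
    · exact h
  have hr1pos : 0 < r1 := by
    rcases eq_or_lt_of_le hr1I.1 with h | h
    · exfalso; rw [← h] at hgr1'; nlinarith [pow_pos hβpos 2]
    · exact h
  have ht₀r2 : t₀ < r2 := by
    rcases eq_or_lt_of_le hr2I.1 with h | h
    · exfalso; rw [← h] at hgr2'; linarith
    · exact h
  have hr12 : r1 < r2 := lt_trans hr1t ht₀r2
  have hr2pos : 0 < r2 := lt_trans hr1pos hr12
  clear hr1I hr2I
  -- factor g = (t-r1)(t-r2)(α²t² + p t + q)
  obtain ⟨p, hpdef⟩ : ∃ y : ℝ, y = 4 * a1112 + α ^ 2 * (r1 + r2) := ⟨_, rfl⟩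
  obtain ⟨q, hqdef⟩ : ∃ y : ℝ, y = 6 * a1122 + p * (r1 + r2) - α ^ 2 * (r1 * r2) := ⟨_, rfl⟩
  have e1 : (4 * a1222 - (p * (r1 * r2) - q * (r1 + r2))) * r1 + (β ^ 2 - q * (r1 * r2))
      = 0 := by linear_combination hgr1' + r1 ^ 3 * hpdef + r1 ^ 2 * hqdef
  have e2 : (4 * a1222 - (p * (r1 * r2) - q * (r1 + r2))) * r2 + (β ^ 2 - q * (r1 * r2))
      = 0 := by linear_combination hgr2' + r2 ^ 3 * hpdef + r2 ^ 2 * hqdef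
  have h3 : (4 * a1222 - (p * (r1 * r2) - q * (r1 + r2))) * (r1 - r2) = 0 := by
    linear_combination e1 - e2
  have hXzero : 4 * a1222 - (p * (r1 * r2) - q * (r1 + r2)) = 0 := by
    rcases mul_eq_zero.mp h3 with h | h
    · exact h
    · exact absurd (sub_eq_zero.mp h) (ne_of_lt hr12)
  have hYzero : β ^ 2 = q * (r1 * r2) := by linear_combination e1 - r1 * hXzero
  have hb : a1112 = (p - α ^ 2 * (r1 + r2)) / 4 := by linarith [hpdef]
  have hcq : a1122 = (q - p * (r1 + r2) + α ^ 2 * (r1 * r2)) / 6 := by linarith [hqdef]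
  have hd : a1222 = (p * (r1 * r2) - q * (r1 + r2)) / 4 := by linarith [hXzero]
  subst hb
  subst hcq
  subst hd
  clear hpdef hqdef e1 e2 h3 hXzero hgr1' hgr2'
  -- q is positive
  have hq_pos : 0 < q := by nlinarith only [hYzero, mul_pos hr1pos hr2pos, pow_pos hβpos 2]
  -- discriminant of the quadratic factor is nonnegative
  rw [hYzero] at hIJ
  have hIJ' : 0 ≤ (r1 - r2) ^ 2 * (p ^ 2 - 4 * α ^ 2 * q) *
      (α ^ 2 * r1 ^ 2 + p * r1 + q) ^ 2 * (α ^ 2 * r2 ^ 2 + p * r2 + q) ^ 2 := by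
    nlinarith only [hIJ]
  clear hIJ
  have hdisc : 0 ≤ p ^ 2 - 4 * α ^ 2 * q := by
    rcases eq_or_ne (α ^ 2 * r1 ^ 2 + p * r1 + q) 0 with hz1 | hz1
    · have hzz : p ^ 2 - 4 * α ^ 2 * q = (p + 2 * α ^ 2 * r1) ^ 2 := by
        linear_combination (-4 * α ^ 2) * hz1
      rw [hzz]; positivity
    · rcases eq_or_ne (α ^ 2 * r2 ^ 2 + p * r2 + q) 0 with hz2 | hz2
      · have hzz : p ^ 2 - 4 * α ^ 2 * q = (p + 2 * α ^ 2 * r2) ^ 2 := by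
          linear_combination (-4 * α ^ 2) * hz2
        rw [hzz]; positivity
      · by_contra hlt
        push_neg at hlt
        have hz1' : 0 < (α ^ 2 * r1 ^ 2 + p * r1 + q) ^ 2 :=
          lt_of_le_of_ne (sq_nonneg _) (Ne.symm (pow_ne_zero 2 hz1))
        have hz2' : 0 < (α ^ 2 * r2 ^ 2 + p * r2 + q) ^ 2 :=
          lt_of_le_of_ne (sq_nonneg _) (Ne.symm (pow_ne_zero 2 hz2))
        have h12 : 0 < (r1 - r2) ^ 2 :=
          lt_of_le_of_ne (sq_nonneg _)
            (Ne.symm (pow_ne_zero 2 (sub_ne_zero_of_ne (ne_of_lt hr12))))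
        nlinarith only [hIJ', mul_pos (mul_pos h12 hz1') hz2', hlt]
  clear hIJ'
  -- value of the quadratic factor at t₀ is positive
  have hfe : α ^ 2 * t₀ ^ 4 + 4 * ((p - α ^ 2 * (r1 + r2)) / 4) * t₀ ^ 3
      + 6 * ((q - p * (r1 + r2) + α ^ 2 * (r1 * r2)) / 6) * t₀ ^ 2
      + 4 * ((p * (r1 * r2) - q * (r1 + r2)) / 4) * t₀ + β ^ 2
      = (t₀ - r1) * (t₀ - r2) * (α ^ 2 * t₀ ^ 2 + p * t₀ + q) := by
    linear_combination hYzero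
  have hpos2 : 0 < α ^ 2 * t₀ ^ 2 + p * t₀ + q := by
    by_contra hcon
    push_neg at hcon
    have hpn : (t₀ - r1) * (t₀ - r2) < 0 :=
      mul_neg_of_pos_of_neg (sub_pos.mpr hr1t) (sub_neg.mpr ht₀r2)
    nlinarith only [hgneg, hfe, hpn, hcon]
  -- introduce γ = β / α
  obtain ⟨γ, hγd⟩ : ∃ y : ℝ, y = β / α := ⟨_, rfl⟩
  have hγpos : 0 < γ := by rw [hγd]; positivity
  have hβγ : β = γ * α := by rw [hγd]; field_simp
  subst hβγ
  -- symmetric functions of the two roots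
  obtain ⟨P, hPd⟩ : ∃ y : ℝ, y = r1 + r2 := ⟨_, rfl⟩
  obtain ⟨Q, hQd⟩ : ∃ y : ℝ, y = r1 * r2 := ⟨_, rfl⟩
  have hPpos : 0 < P := by rw [hPd]; linarith
  have hQpos : 0 < Q := by rw [hQd]; positivity
  have hPQ : 4 * Q < P ^ 2 := by
    have h12 : 0 < (r1 - r2) ^ 2 :=
      lt_of_le_of_ne (sq_nonneg _)
        (Ne.symm (pow_ne_zero 2 (sub_ne_zero_of_ne (ne_of_lt hr12))))
    rw [hPd, hQd]
    nlinarith only [h12]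
  have hrelQ : α ^ 2 * γ ^ 2 = q * Q := by rw [hQd]; linear_combination hYzero
  have hrelA : α ^ 2 * (α ^ 2 * γ ^ 2) = α ^ 2 * (q * Q) := by rw [hrelQ]
  have hneg' : t₀ ^ 2 - P * t₀ + Q < 0 := by
    rw [hPd, hQd]
    nlinarith only [mul_pos (sub_pos.mpr hr1t) (sub_pos.mpr ht₀r2)]
  -- main squared inequality in symmetric-function form
  have h16 : α ^ 2 * (((p * Q - q * P) - γ * (p - α ^ 2 * P)) ^ 2
      - 16 * α ^ 2 * γ ^ 2 * (q - p * P + α ^ 2 * Q + 2 * α ^ 2 * γ)) ≤ 0 := by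
    rw [hPd, hQd]
    linarith only [habs2]
  have H2γ : ((p * Q - q * P) - γ * (p - α ^ 2 * P)) ^ 2
      ≤ 16 * α ^ 2 * γ ^ 2 * (q - p * P + α ^ 2 * Q + 2 * α ^ 2 * γ) := by
    by_contra hcon
    push_neg at hcon
    nlinarith only [h16, mul_pos (pow_pos hαpos 2) (sub_pos.mpr hcon)]
  clear h16 habs2 hgneg hfe
  -- final case analysis on the sign of p
  rcases lt_trichotomy p 0 with hp | hp | hp
  · -- p < 0
    have m2 : 4 * α ^ 2 * γ < P * (-p) := by
      nlinarith only [hdisc, hPQ, hrelA, hq_pos, hQpos, mul_pos hPpos (neg_pos.mpr hp),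
        mul_pos (pow_pos hαpos 2) hγpos, mul_pos (neg_pos.mpr hp) (neg_pos.mpr hp)]
    rcases hc with ⟨hc1, hc2⟩ | ⟨hc1, hc2⟩
    · -- case (i)
      have hci : q - p * P + α ^ 2 * Q ≤ 6 * α ^ 2 * γ := by
        rw [hPd, hQd]; linarith only [hc2]
      have m1 : 2 * α ^ 2 * γ ≤ α ^ 2 * Q + q := by
        nlinarith only [sq_nonneg (α ^ 2 * Q - q), hrelA, mul_pos (pow_pos hαpos 2) hγpos,
          mul_pos (pow_pos hαpos 2) hQpos, hq_pos]
      linarith only [m1, m2, hci]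
    · -- case (ii)
      have h6m : 0 ≤ 6 * α ^ 2 * ((q - p * (r1 + r2) + α ^ 2 * (r1 * r2)) / 6) * (γ * α) ^ 2
          - 2 * α ^ 2 * (γ * α) ^ 2 * (α * (γ * α)) := by
        nlinarith only [hc1, mul_pos (mul_pos hαpos hγpos) hαpos,
          sq_nonneg (γ * α), mul_pos (mul_pos (mul_pos hαpos hγpos) hαpos)
            (mul_pos (mul_pos hαpos hγpos) hαpos)]
      have habsii2 : ((p * (r1 * r2) - q * (r1 + r2)) / 4 * α
          + (p - α ^ 2 * (r1 + r2)) / 4 * (γ * α)) ^ 2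
          ≤ 6 * α ^ 2 * ((q - p * (r1 + r2) + α ^ 2 * (r1 * r2)) / 6) * (γ * α) ^ 2
            - 2 * α ^ 2 * (γ * α) ^ 2 * (α * (γ * α)) := by
        calc ((p * (r1 * r2) - q * (r1 + r2)) / 4 * α
              + (p - α ^ 2 * (r1 + r2)) / 4 * (γ * α)) ^ 2
            = |(p * (r1 * r2) - q * (r1 + r2)) / 4 * α
              + (p - α ^ 2 * (r1 + r2)) / 4 * (γ * α)| ^ 2 := (sq_abs _).symm
          _ ≤ Real.sqrt (6 * α ^ 2 * ((q - p * (r1 + r2) + α ^ 2 * (r1 * r2)) / 6) * (γ * α) ^ 2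
              - 2 * α ^ 2 * (γ * α) ^ 2 * (α * (γ * α))) ^ 2 :=
            pow_le_pow_left₀ (abs_nonneg _) hc2 2
          _ = _ := Real.sq_sqrt h6m
      have h16' : α ^ 2 * (((p * Q - q * P) + γ * (p - α ^ 2 * P)) ^ 2
          - 16 * α ^ 2 * γ ^ 2 * (q - p * P + α ^ 2 * Q - 2 * α ^ 2 * γ)) ≤ 0 := by
        rw [hPd, hQd]
        linarith only [habsii2]
      have Hiiγ : ((p * Q - q * P) + γ * (p - α ^ 2 * P)) ^ 2
          ≤ 16 * α ^ 2 * γ ^ 2 * (q - p * P + α ^ 2 * Q - 2 * α ^ 2 * γ) := by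
        by_contra hcon
        push_neg at hcon
        nlinarith only [h16', mul_pos (pow_pos hαpos 2) (sub_pos.mpr hcon)]
      have n1 : 16 * α ^ 4 * γ ^ 2 * Q < (α ^ 2 * γ * P - p * Q) ^ 2 := by
        nlinarith only [sq_nonneg (α ^ 2 * γ * P + p * Q),
          mul_pos (mul_pos (pow_pos hαpos 2) hγpos) hQpos, m2]
      have k6' : Q ^ 2 * (((p * Q - q * P) + γ * (p - α ^ 2 * P)) ^ 2
          - 16 * α ^ 2 * γ ^ 2 * (q - p * P + α ^ 2 * Q - 2 * α ^ 2 * γ))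
          = (Q - γ) ^ 2 * ((α ^ 2 * γ * P - p * Q) ^ 2 - 16 * α ^ 4 * γ ^ 2 * Q)
            + 4 * γ * Q * (α ^ 2 * γ * P + p * Q) ^ 2 := by
        linear_combination (-(α ^ 2 * γ ^ 2 * P ^ 2) + 16 * α ^ 2 * γ ^ 2 * Q
          - 2 * α ^ 2 * γ * P ^ 2 * Q + 2 * γ * p * P * Q + 2 * p * P * Q ^ 2
          - q * P ^ 2 * Q) * hrelQ
      have k7' : Q ^ 2 * (((p * Q - q * P) + γ * (p - α ^ 2 * P)) ^ 2
          - 16 * α ^ 2 * γ ^ 2 * (q - p * P + α ^ 2 * Q - 2 * α ^ 2 * γ)) ≤ 0 := by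
        nlinarith only [Hiiγ, sq_nonneg Q]
      have h8 : (Q - γ) ^ 2 ≤ 0 := by
        nlinarith only [k6', k7', n1,
          mul_nonneg (mul_nonneg (mul_nonneg (by norm_num : (0:ℝ) ≤ 4) hγpos.le) hQpos.le)
            (sq_nonneg (α ^ 2 * γ * P + p * Q))]
      have h9 : (Q - γ) ^ 2 = 0 := le_antisymm h8 (sq_nonneg _)
      have hQγ : Q = γ := sub_eq_zero.mp (pow_eq_zero_iff two_ne_zero |>.mp h9)
      have h11 : (Q - γ) ^ 2 * ((α ^ 2 * γ * P - p * Q) ^ 2 - 16 * α ^ 4 * γ ^ 2 * Q) = 0 := by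
        rw [h9]; ring
      have hY2 : 4 * γ * Q * (α ^ 2 * γ * P + p * Q) ^ 2 ≤ 0 := by
        linarith only [k6', k7', h11]
      have hY2' : (α ^ 2 * γ * P + p * Q) ^ 2 ≤ 0 := by
        nlinarith only [hY2, mul_pos hγpos hQpos]
      have hYz : α ^ 2 * γ * P + p * Q = 0 :=
        pow_eq_zero_iff two_ne_zero |>.mp (le_antisymm hY2' (sq_nonneg _))
      have hpe : p = -(α ^ 2 * P) := by
        have h12 : γ * (α ^ 2 * P + p) = 0 := by linear_combination hYz - p * hQγ
        rcases mul_eq_zero.mp h12 with h | h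
        · exact absurd h (ne_of_gt hγpos)
        · linarith
      have hqe : q = α ^ 2 * Q := by
        have h13 : γ * (α ^ 2 * γ - q) = 0 := by linear_combination hrelQ + q * hQγ
        rcases mul_eq_zero.mp h13 with h | h
        · exact absurd h (ne_of_gt hγpos)
        · rw [hQγ]; linarith
      rw [hpe, hqe] at hpos2
      nlinarith only [hpos2, hneg', pow_pos hαpos 2]
  · -- p = 0 is impossible
    rw [hp] at hdisc
    nlinarith only [hdisc, mul_pos (pow_pos hαpos 2) hq_pos]
  · -- p > 0
    have k1 : 4 * α ^ 2 * γ < P * p := by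
      nlinarith only [hdisc, hPQ, hrelA, hq_pos, hQpos, mul_pos hPpos hp,
        mul_pos (pow_pos hαpos 2) hγpos, mul_pos hp hp]
    have k2 : 16 * α ^ 4 * γ ^ 2 * Q ≤ (α ^ 2 * γ * P + p * Q) ^ 2 := by
      nlinarith only [sq_nonneg (α ^ 2 * γ * P - p * Q),
        mul_pos (mul_pos (pow_pos hαpos 2) hγpos) hQpos, k1]
    have k6 : Q ^ 2 * (((p * Q - q * P) - γ * (p - α ^ 2 * P)) ^ 2
        - 16 * α ^ 2 * γ ^ 2 * (q - p * P + α ^ 2 * Q + 2 * α ^ 2 * γ))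
        = (Q - γ) ^ 2 * ((α ^ 2 * γ * P + p * Q) ^ 2 - 16 * α ^ 4 * γ ^ 2 * Q)
          + 16 * γ ^ 2 * Q ^ 2 * (α ^ 2 * p * P - 4 * α ^ 4 * γ) := by
      linear_combination (-(α ^ 2 * γ ^ 2 * P ^ 2) + 16 * α ^ 2 * γ ^ 2 * Q
        + 2 * α ^ 2 * γ * P ^ 2 * Q - 2 * γ * p * P * Q + 2 * p * P * Q ^ 2
        - q * P ^ 2 * Q) * hrelQ
    have k4 : 0 ≤ (Q - γ) ^ 2 * ((α ^ 2 * γ * P + p * Q) ^ 2 - 16 * α ^ 4 * γ ^ 2 * Q) :=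
      mul_nonneg (sq_nonneg _) (by linarith only [k2])
    have k5 : 0 < 16 * γ ^ 2 * Q ^ 2 * (α ^ 2 * p * P - 4 * α ^ 4 * γ) := by
      have hin : 0 < α ^ 2 * p * P - 4 * α ^ 4 * γ := by
        nlinarith only [k1, pow_pos hαpos 2]
      exact mul_pos (by positivity) hin
    have k7 : Q ^ 2 * (((p * Q - q * P) - γ * (p - α ^ 2 * P)) ^ 2
        - 16 * α ^ 2 * γ ^ 2 * (q - p * P + α ^ 2 * Q + 2 * α ^ 2 * γ)) ≤ 0 := by
      nlinarith only [H2γ, sq_nonneg Q]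
    linarith only [k4, k5, k6, k7]
end

section
/- Let λ₁, λ₂, λ₃, λ₄, λ_S, λ_{S1}, λ_{S2} be real numbers, μ ≥ 0, ρ ∈ [0,1], with λ_S > 0, and let V(h₁,h₂,s) = λ_S s⁴ + M(h₁,h₂)s² + Ṽ(h₁,h₂) where M(h₁,h₂) = λ_{S1}h₁² + λ_{S2}h₂² − μρh₁h₂ and Ṽ(h₁,h₂) = λ₁h₁⁴ + λ₂h₂⁴ + (λ₃ + λ₄ρ²)h₁²h₂². Then V(h₁,h₂,s) > 0 for all (h₁,h₂,s) ∈ ℝ³₊ \ {0} if and only if for every (h₁,h₂) ∈ ℝ²₊ \ {0} one of the following holds: (1) M(h₁,h₂) ≥ 0 and Ṽ(h₁,h₂) > 0; or (2) M(h₁,h₂) < 0 and 4λ_S Ṽ(h₁,h₂) − M(h₁,h₂)² > 0. -/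
/-- The Z₃ scalar dark matter potential `V(h₁,h₂,s) = λ_S s⁴ + M(h₁,h₂)s² + Ṽ(h₁,h₂)`
with `λ_S > 0` is positive on `ℝ³₊ \ {0}` iff for every `(h₁,h₂) ∈ ℝ²₊ \ {0}`
either `M ≥ 0` and `Ṽ > 0`, or `M < 0` and `4λ_S Ṽ − M² > 0`. -/
theorem Z3_potential_strictly_copositive_iff (l1 l2 l3 l4 lS lS1 lS2 mu rho : ℝ)
    (hmu : 0 ≤ mu) (hrho : rho ∈ Set.Icc (0 : ℝ) 1) (hlS : 0 < lS)
    (M Vt : ℝ → ℝ → ℝ)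
    (hM : ∀ h1 h2, M h1 h2 = lS1 * h1 ^ 2 + lS2 * h2 ^ 2 - mu * rho * h1 * h2)
    (hVt : ∀ h1 h2, Vt h1 h2 =
      l1 * h1 ^ 4 + l2 * h2 ^ 4 + (l3 + l4 * rho ^ 2) * h1 ^ 2 * h2 ^ 2) :
    (∀ h1 h2 s : ℝ, 0 ≤ h1 → 0 ≤ h2 → 0 ≤ s → ¬(h1 = 0 ∧ h2 = 0 ∧ s = 0) →
        0 < lS * s ^ 4 + M h1 h2 * s ^ 2 + Vt h1 h2) ↔
      (∀ h1 h2 : ℝ, 0 ≤ h1 → 0 ≤ h2 → ¬(h1 = 0 ∧ h2 = 0) →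
        ((0 ≤ M h1 h2 ∧ 0 < Vt h1 h2) ∨
         (M h1 h2 < 0 ∧ 0 < 4 * lS * Vt h1 h2 - (M h1 h2) ^ 2))) := by
  constructor
  · intro hV h1 h2 hh1 hh2 hne
    have hv : 0 < Vt h1 h2 := by
      have := hV h1 h2 0 hh1 hh2 le_rfl (by tauto)
      simpa using this
    rcases le_or_gt 0 (M h1 h2) with hm | hm
    · exact Or.inl ⟨hm, hv⟩
    · refine Or.inr ⟨hm, ?_⟩
      set s := Real.sqrt (-(M h1 h2) / (2 * lS)) with hs
      have hsnn : 0 ≤ s := Real.sqrt_nonneg _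
      have hsq : s ^ 2 = -(M h1 h2) / (2 * lS) := by
        rw [hs, Real.sq_sqrt]
        apply div_nonneg (by linarith) (by positivity)
      have key := hV h1 h2 s hh1 hh2 hsnn (by tauto)
      have h2lS : (2 * lS) ≠ 0 := by positivity
      have hs2 : 2 * lS * s ^ 2 = -(M h1 h2) := by
        rw [hsq]; field_simp
      nlinarith [key, sq_nonneg s, sq_nonneg (s ^ 2)]
  · intro hR h1 h2 s hh1 hh2 hs hne
    by_cases h12 : h1 = 0 ∧ h2 = 0
    · obtain ⟨e1, e2⟩ := h12
      have hsne : s ≠ 0 := by tauto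
      have : M h1 h2 = 0 := by rw [hM, e1, e2]; ring
      have hv : Vt h1 h2 = 0 := by rw [hVt, e1, e2]; ring
      rw [this, hv]
      have : 0 < s ^ 4 := by positivity
      nlinarith
    · rcases hR h1 h2 hh1 hh2 h12 with ⟨hm, hv⟩ | ⟨hm, hd⟩
      · nlinarith [sq_nonneg s, sq_nonneg (s ^ 2), pow_pos hlS 1]
      · nlinarith [sq_nonneg (2 * lS * s ^ 2 + M h1 h2), hlS]
end
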